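/- Let λ₁ > 0 and α > 0, and set δ := λ₁α/(α² + 4λ₁) and ν_α := λ₁α / (√(α²+4λ₁)(α + √(α²+4λ₁))). For any u ∈ H¹₀ and v ∈ L² one has −2δ‖u‖²_{H¹₀} − 2(α−δ)‖v‖²_{L²} + 2δ(α−δ)⟨u,v⟩_{L²} ≤ −2ν_α(‖u‖²_{H¹₀} + ‖v‖²_{L²}) − α‖v‖²_{L²}, where the H¹₀-norm satisfies ‖u‖²_{H¹₀} ≥ λ₁‖u‖²_{L²}. -/
import Mathlib

set_option maxHeartbeats 1000000


open scoped RealInnerProductSpace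

lemma young_aux (A B C x y : ℝ) (hA : 0 < A) (h : C ^ 2 ≤ A * B) :
    2 * C * (x * y) ≤ A * x ^ 2 + B * y ^ 2 := by
  nlinarith [sq_nonneg (A * x - C * y), mul_nonneg (sub_nonneg.2 h) (sq_nonneg y)]

/-- with δ := λ₁α/(α²+4λ₁) and
ν_α := λ₁α/(√(α²+4λ₁)(α+√(α²+4λ₁))), for u ∈ H¹₀ (with squared H¹₀-norm Q
satisfying Q ≥ λ₁‖u‖²_{L²}) and v ∈ L²:
-2δQ - 2(α-δ)‖v‖² + 2δ(α-δ)⟨u,v⟩ ≤ -2ν_α(Q + ‖v‖²) - α‖v‖². -/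
theorem stmt_9 {E : Type*} [NormedAddCommGroup E] [InnerProductSpace ℝ E]
    (lam1 α δ ν : ℝ) (hlam1 : 0 < lam1) (hα : 0 < α)
    (hδ : δ = lam1 * α / (α ^ 2 + 4 * lam1))
    (hν : ν = lam1 * α / (Real.sqrt (α ^ 2 + 4 * lam1) * (α + Real.sqrt (α ^ 2 + 4 * lam1))))
    (u v : E) (Q : ℝ) (hQ : lam1 * ‖u‖ ^ 2 ≤ Q) :
    -2 * δ * Q - 2 * (α - δ) * ‖v‖ ^ 2 + 2 * δ * (α - δ) * ⟪u, v⟫ ≤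
      -2 * ν * (Q + ‖v‖ ^ 2) - α * ‖v‖ ^ 2 := by
  set s : ℝ := Real.sqrt (α ^ 2 + 4 * lam1) with hs
  have hpos : (0:ℝ) < α ^ 2 + 4 * lam1 := by positivity
  have hs2 : s ^ 2 = α ^ 2 + 4 * lam1 := Real.sq_sqrt hpos.le
  have hsp : 0 < s := Real.sqrt_pos.2 hpos
  clear_value s
  have hsa : α < s := by nlinarith
  have hl : lam1 = (s ^ 2 - α ^ 2) / 4 := by rw [hs2]; ring
  have hsa2 : 0 < s ^ 2 - α ^ 2 := by nlinarith
  have hδv : δ = α * (s ^ 2 - α ^ 2) / (4 * s ^ 2) := by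
    rw [hδ, ← hs2, hl]; field_simp
  have hνv : ν = α * (s - α) / (4 * s) := by
    rw [hν, hl, div_eq_div_iff (by positivity) (by positivity)]
    ring
  set X := ‖u‖ with hX
  set Y := ‖v‖ with hY
  have hX0 : 0 ≤ X := norm_nonneg u
  have hY0 : 0 ≤ Y := norm_nonneg v
  have hin : ⟪u, v⟫ ≤ X * Y := real_inner_le_norm u v
  have hδpos : 0 < δ := by rw [hδv]; positivity
  have hδα : δ < α := by
    rw [hδv, div_lt_iff₀ (by positivity)]; nlinarith
  have hδν : 0 < δ - ν := by
    rw [hδv, hνv, div_sub_div _ _ (by positivity) (by positivity),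
      lt_div_iff₀ (by positivity)]
    nlinarith [mul_pos (mul_pos (mul_pos hα hα) hsp) (sub_pos.2 hsa)]
  have e2 : 2 * lam1 * (δ - ν) = α ^ 2 * (s - α) * (s ^ 2 - α ^ 2) / (8 * s ^ 2) := by
    rw [hl, hδv, hνv]; field_simp; ring
  have e3 : α - 2 * δ - 2 * ν = α ^ 2 * (α + s) / (2 * s ^ 2) := by
    rw [hδv, hνv]; field_simp; ring
  have hApos : 0 < 2 * lam1 * (δ - ν) := by positivity
  have hCAB : (δ * (α - δ)) ^ 2 ≤ (2 * lam1 * (δ - ν)) * (α - 2 * δ - 2 * ν) := by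
    have e1 : δ * (α - δ)
        = α ^ 2 * (s ^ 2 - α ^ 2) * (3 * s ^ 2 + α ^ 2) / (16 * s ^ 4) := by
      rw [hδv]; field_simp; ring
    have h4 : (3 * s ^ 2 + α ^ 2) ^ 2 ≤ 16 * s ^ 4 := by nlinarith
    rw [e1, e2, e3, div_mul_div_comm, div_pow,
      div_le_div_iff₀ (by positivity) (by positivity)]
    have key := mul_le_mul_of_nonneg_left h4
      (show (0:ℝ) ≤ 16 * s ^ 4 * (α ^ 4 * (s ^ 2 - α ^ 2) ^ 2) by positivity)
    linarith [key]
  have h1 : 2 * δ * (α - δ) * ⟪u, v⟫ ≤ 2 * (δ * (α - δ)) * (X * Y) := by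
    have hc : 0 ≤ 2 * δ * (α - δ) := by nlinarith
    nlinarith [mul_le_mul_of_nonneg_left hin hc]
  have h2 := young_aux (2 * lam1 * (δ - ν)) (α - 2 * δ - 2 * ν) (δ * (α - δ)) X Y
    hApos hCAB
  have h3 : 2 * (δ - ν) * (lam1 * X ^ 2) ≤ 2 * (δ - ν) * Q :=
    mul_le_mul_of_nonneg_left hQ (by linarith)
  linarith [h1, h2, h3]
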